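/- arXiv:2208.02589 — 3 statements merged into one kernel-verified Lean document; each statement's English description precedes it below -/
import Mathlib

section
/- Let w : ℕ → (0,∞) be a weight function and define U₁(n) = ∑_{j=0}^{n-1} 1/w(2j) and V₁(n) = ∑_{j=0}^{n-1} 1/w(2j+1). If w is non-increasing, if the limit γ := lim_{n→∞}(V₁(n) - U₁(n)) exists, and if 1/w(2n) → 1 as n → ∞, then γ ∈ [0, 1). -/
open Filter Finset

/-- For a positive non-increasing weight function `w`, if
`γ = lim (V₁(n) - U₁(n))` exists and `(w(2n))⁻¹ → 1`, then `γ ∈ [0,1)`. -/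
theorem stmt0 (w : ℕ → ℝ) (hw : ∀ n, 0 < w n)
    (hmono : ∀ m n, m ≤ n → w n ≤ w m)
    (γ : ℝ)
    (hγ : Tendsto
      (fun n => (∑ j ∈ range n, (w (2 * j + 1))⁻¹) - ∑ j ∈ range n, (w (2 * j))⁻¹)
      atTop (nhds γ))
    (hlim : Tendsto (fun n => (w (2 * n))⁻¹) atTop (nhds 1)) :
    0 ≤ γ ∧ γ < 1 := by
  have hD : ∀ n, (∑ j ∈ range n, (w (2 * j + 1))⁻¹) - ∑ j ∈ range n, (w (2 * j))⁻¹
      = ∑ j ∈ range n, ((w (2 * j + 1))⁻¹ - (w (2 * j))⁻¹) := by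
    intro n; rw [Finset.sum_sub_distrib]
  constructor
  · refine ge_of_tendsto' hγ (fun n => ?_)
    rw [hD]
    apply Finset.sum_nonneg
    intro j _
    have : w (2 * j + 1) ≤ w (2 * j) := hmono _ _ (Nat.le_succ _)
    have := one_div_le_one_div_of_le (hw (2 * j + 1)) this
    simpa [one_div] using this
  · have hbound : ∀ n, (∑ j ∈ range n, (w (2 * j + 1))⁻¹) - ∑ j ∈ range n, (w (2 * j))⁻¹
        ≤ (w (2 * n))⁻¹ - (w (2 * 0))⁻¹ := by
      intro n
      rw [hD]
      calc ∑ j ∈ range n, ((w (2 * j + 1))⁻¹ - (w (2 * j))⁻¹)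
          ≤ ∑ j ∈ range n, ((w (2 * (j + 1)))⁻¹ - (w (2 * j))⁻¹) := by
            apply Finset.sum_le_sum
            intro j _
            have h1 : w (2 * (j + 1)) ≤ w (2 * j + 1) := hmono _ _ (by omega)
            have := one_div_le_one_div_of_le (hw (2 * (j + 1))) h1
            simp only [one_div] at this
            linarith
        _ = (w (2 * n))⁻¹ - (w (2 * 0))⁻¹ := Finset.sum_range_sub (fun j => (w (2 * j))⁻¹) n
    have hlim2 : Tendsto (fun n => (w (2 * n))⁻¹ - (w (2 * 0))⁻¹) atTop
        (nhds (1 - (w (2 * 0))⁻¹)) := hlim.sub_const _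
    have hγle : γ ≤ 1 - (w (2 * 0))⁻¹ :=
      le_of_tendsto_of_tendsto' hγ hlim2 hbound
    have : 0 < (w (2 * 0))⁻¹ := inv_pos.mpr (hw _)
    linarith
end

section
/- Let w(k) = (k+1)^{−α} with α > 0. For the generalized Pólya urn with b(i) = w(2i+1), r(i) = w(2i), the conditional drift satisfies: given 𝔅_i and ℜ_i with i = 𝔅_i + ℜ_i ≥ 1 and 𝔇_i = ℜ_i − 𝔅_i, one has ((2𝔅_i+2)^α − (2ℜ_i+1)^α)/((2𝔅_i+2)^α + (2ℜ_i+1)^α) = −α𝔇_i/i + ε_i where |ε_i| ≤ C(𝔇_i² + i)/i² for a constant C depending only on α, uniformly over all i ≥ 1 and all 𝔇_i with |𝔇_i| ≤ i/2. -/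
/-!
With `x = i - d + 2`, `y = i + d + 1` and `r = (x - y) / (x + y) = (1 - 2d) / (2i + 3)`, the
ratio `(x^α - y^α) / (x^α + y^α)` equals `tanh (α · artanh r)`. Since `tanh u = u + O(u²)` and
`artanh r = r + O(r²)` for `|r| ≤ 1/2`, it is `α r + O(r²)`, and both `r²` and `r + d/i` are
`O((d² + i) / i²)`.
-/

open Real

namespace Real

theorem tanh_eq_exp_two_mul (u : ℝ) : tanh u = (exp (2 * u) - 1) / (exp (2 * u) + 1) := by
  rw [tanh_eq, exp_neg, two_mul, exp_add]
  field_simp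

theorem abs_tanh_sub_self_le (u : ℝ) : |tanh u - u| ≤ 8 * u ^ 2 := by
  rcases le_or_gt |u| (1 / 2) with hu | hu
  · have hE : |exp (2 * u) - 1 - 2 * u| ≤ 4 * u ^ 2 := by
      have := abs_exp_sub_one_sub_id_le (x := 2 * u) (by rw [abs_mul, abs_two]; linarith)
      linarith
    have hden : 1 ≤ exp (2 * u) + 1 := by linarith [exp_pos (2 * u)]
    -- with `E = exp (2u) - 1 - 2u`, the numerator of `tanh u - u` is `E - 2u² - uE`
    have hnum : |(exp (2 * u) - 1 - 2 * u) * (1 - u) - 2 * u ^ 2| ≤ 8 * u ^ 2 := by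
      have huE : |u * (exp (2 * u) - 1 - 2 * u)| ≤ 2 * u ^ 2 := by
        rw [abs_mul]; nlinarith [abs_nonneg u, abs_nonneg (exp (2 * u) - 1 - 2 * u)]
      rw [abs_le] at hE huE ⊢
      constructor <;> nlinarith
    have htanh : tanh u - u
        = ((exp (2 * u) - 1 - 2 * u) * (1 - u) - 2 * u ^ 2) / (exp (2 * u) + 1) := by
      rw [tanh_eq_exp_two_mul]
      field_simp
      ring
    rw [htanh, abs_div, abs_of_pos (a := exp (2 * u) + 1) (by linarith), div_le_iff₀ (by linarith)]
    nlinarith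
  · calc |tanh u - u| ≤ |tanh u| + |u| := abs_sub _ _
      _ ≤ 1 + |u| := by linarith [abs_tanh_lt_one u]
      _ ≤ 8 * u ^ 2 := by nlinarith [sq_abs u]

theorem abs_artanh_sub_self_le {r : ℝ} (hr : |r| ≤ 1 / 2) : |artanh r - r| ≤ 2 * r ^ 2 := by
  have hlog (s : ℝ) (hs : |s| ≤ 1 / 2) : |s + log (1 - s)| ≤ 2 * s ^ 2 := by
    have := abs_log_sub_add_sum_range_le (x := s) (by linarith) 1
    simp only [Finset.sum_range_one, zero_add, pow_one, Nat.cast_zero, div_one] at this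
    calc |s + log (1 - s)| ≤ |s| ^ 2 / (1 - |s|) := this
      _ ≤ 2 * s ^ 2 := by
        rw [div_le_iff₀ (by linarith), sq_abs]; nlinarith [sq_nonneg s]
  have hplus := hlog (-r) (by rwa [abs_neg])
  have hminus := hlog r hr
  rw [sub_neg_eq_add, add_comm 1 r] at hplus
  rw [artanh_eq_half_log (by constructor <;> linarith [abs_le.mp hr]),
    log_div (by linarith [abs_le.mp hr]) (by linarith [abs_le.mp hr]), add_comm 1 r]
  rw [abs_le] at hplus hminus ⊢
  constructor <;> nlinarith

theorem abs_artanh_le {r : ℝ} (hr : |r| ≤ 1 / 2) : |artanh r| ≤ 2 * |r| := by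
  have := abs_artanh_sub_self_le hr
  have := abs_sub_abs_le_abs_sub (artanh r) r
  nlinarith [sq_abs r, abs_nonneg r]

theorem rpow_sub_div_rpow_add_eq_tanh {x y : ℝ} (hx : 0 < x) (hy : 0 < y) (α : ℝ) :
    (x ^ α - y ^ α) / (x ^ α + y ^ α) = tanh (α * artanh ((x - y) / (x + y))) := by
  have hr : (x - y) / (x + y) ∈ Set.Icc (-1) 1 := by
    rw [Set.mem_Icc, le_div_iff₀ (by positivity), div_le_iff₀ (by positivity)]
    constructor <;> linarith
  have hratio : (1 + (x - y) / (x + y)) / (1 - (x - y) / (x + y)) = x / y := by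
    have hs : x + y ≠ 0 := by positivity
    rw [one_add_div hs, one_sub_div hs, div_div_div_cancel_right₀ hs,
      div_eq_div_iff (by linarith) hy.ne']
    ring
  have hexp : exp (2 * (α * artanh ((x - y) / (x + y)))) = x ^ α / y ^ α := by
    rw [artanh_eq_half_log hr, hratio, ← div_rpow hx.le hy.le, rpow_def_of_pos (by positivity)]
    ring_nf
  have hyα : 0 < y ^ α := rpow_pos_of_pos hy α
  rw [tanh_eq_exp_two_mul, hexp]
  field_simp

theorem abs_tanh_mul_artanh_sub_le (α : ℝ) {r : ℝ} (hr : |r| ≤ 1 / 2) :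
    |tanh (α * artanh r) - α * r| ≤ (32 * α ^ 2 + 2 * |α|) * r ^ 2 := by
  have htanh := abs_tanh_sub_self_le (α * artanh r)
  have hsq : (α * artanh r) ^ 2 ≤ 4 * α ^ 2 * r ^ 2 := by
    calc (α * artanh r) ^ 2 = α ^ 2 * |artanh r| ^ 2 := by rw [mul_pow, sq_abs]
      _ ≤ α ^ 2 * (2 * |r|) ^ 2 := by gcongr; exact abs_artanh_le hr
      _ = 4 * α ^ 2 * r ^ 2 := by rw [mul_pow, sq_abs]; ring
  have hlin : |α * artanh r - α * r| ≤ |α| * (2 * r ^ 2) := by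
    rw [← mul_sub, abs_mul]
    exact mul_le_mul_of_nonneg_left (abs_artanh_sub_self_le hr) (abs_nonneg α)
  calc |tanh (α * artanh r) - α * r|
      ≤ |tanh (α * artanh r) - α * artanh r| + |α * artanh r - α * r| := abs_sub_le _ _ _
    _ ≤ (32 * α ^ 2 + 2 * |α|) * r ^ 2 := by nlinarith

end Real

lemma abs_one_sub_two_mul_div_le {I D : ℝ} (hI : 1 ≤ I) (hD : 2 * |D| ≤ I) :
    |(1 - 2 * D) / (2 * I + 3)| ≤ 1 / 2 := by
  rw [abs_div, abs_of_pos (a := 2 * I + 3) (by linarith), div_le_iff₀ (by linarith)]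
  have := abs_sub (1 : ℝ) (2 * D)
  rw [abs_one, abs_mul, abs_two] at this
  linarith

lemma sq_one_sub_two_mul_div_le {I D : ℝ} (hI : 1 ≤ I) :
    ((1 - 2 * D) / (2 * I + 3)) ^ 2 ≤ 2 * ((D ^ 2 + I) / I ^ 2) := by
  rw [div_pow, div_le_iff₀ (by positivity), mul_div_assoc', div_mul_eq_mul_div,
    le_div_iff₀ (by positivity)]
  nlinarith [sq_nonneg (1 + 2 * D), sq_nonneg D, mul_le_mul_of_nonneg_left hI (sq_nonneg D)]

lemma abs_one_sub_two_mul_div_add_div_le {I D : ℝ} (hI : 1 ≤ I) (hD : 2 * |D| ≤ I) :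
    |(1 - 2 * D) / (2 * I + 3) + D / I| ≤ 5 / 4 * ((D ^ 2 + I) / I ^ 2) := by
  have hI0 : 0 < I := by linarith
  have hsum : (1 - 2 * D) / (2 * I + 3) + D / I = (I + 3 * D) / (I * (2 * I + 3)) := by
    field_simp
    ring
  have hnum : |I + 3 * D| ≤ 5 / 2 * I := by
    have := abs_add_le I (3 * D)
    rw [abs_of_pos hI0, abs_mul, abs_of_pos (by norm_num : (0 : ℝ) < 3)] at this
    linarith
  rw [hsum, abs_div, abs_of_pos (a := I * (2 * I + 3)) (by positivity),
    div_le_iff₀ (by positivity)]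
  calc |I + 3 * D| ≤ 5 / 2 * I := hnum
    _ ≤ 5 / 4 * ((D ^ 2 + I) / I ^ 2) * (I * (2 * I + 3)) := by
      field_simp
      nlinarith [sq_nonneg D, mul_le_mul_of_nonneg_left hI (sq_nonneg D)]

theorem stmt5_general (α : ℝ) :
    ∃ C : ℝ, 0 < C ∧ ∀ i : ℕ, 1 ≤ i → ∀ d : ℤ, 2 * |d| ≤ (i : ℤ) →
      |(((i : ℝ) - (d : ℝ) + 2) ^ α - ((i : ℝ) + (d : ℝ) + 1) ^ α)
          / (((i : ℝ) - (d : ℝ) + 2) ^ α + ((i : ℝ) + (d : ℝ) + 1) ^ α)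
        + α * (d : ℝ) / (i : ℝ)|
      ≤ C * ((d : ℝ) ^ 2 + (i : ℝ)) / (i : ℝ) ^ 2 := by
  refine ⟨64 * α ^ 2 + 6 * |α| + 1, by positivity, fun i hi d hd => ?_⟩
  have hI : (1 : ℝ) ≤ i := by exact_mod_cast hi
  have hD : 2 * |(d : ℝ)| ≤ i := by exact_mod_cast (Int.cast_le (R := ℝ)).mpr hd
  have hd_le : (d : ℝ) ≤ i / 2 := by linarith [le_abs_self (d : ℝ)]
  have hd_ge : -(i / 2) ≤ (d : ℝ) := by linarith [neg_abs_le (d : ℝ)]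
  set r := (1 - 2 * (d : ℝ)) / (2 * i + 3)
  set w := ((d : ℝ) ^ 2 + i) / (i : ℝ) ^ 2
  have hr : ((i : ℝ) - d + 2 - (i + d + 1)) / (i - d + 2 + (i + d + 1)) = r := by
    congr 1 <;> ring
  rw [rpow_sub_div_rpow_add_eq_tanh (by linarith) (by linarith), hr, mul_div_assoc]
  calc |tanh (α * artanh r) + α * (d / i)|
      = |(tanh (α * artanh r) - α * r) + α * (r + d / i)| := by ring_nf
    _ ≤ (32 * α ^ 2 + 2 * |α|) * r ^ 2 + |α| * |r + d / i| := by
      rw [← abs_mul]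
      exact (abs_add_le _ _).trans
        (add_le_add_left (abs_tanh_mul_artanh_sub_le α (abs_one_sub_two_mul_div_le hI hD)) _)
    _ ≤ (32 * α ^ 2 + 2 * |α|) * (2 * w) + |α| * (5 / 4 * w) := by
      gcongr
      · exact sq_one_sub_two_mul_div_le hI
      · exact abs_one_sub_two_mul_div_add_div_le hI hD
    _ ≤ (64 * α ^ 2 + 6 * |α| + 1) * w := by
      nlinarith [abs_nonneg α, show 0 ≤ w by positivity]
    _ = _ := by ring

/-- Drift expansion for the polynomially self-repelling urn: there is `C = C(α)` such
that for all `i ≥ 1` and all `d` with `|d| ≤ i/2`,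
`|((i−d+2)^α − (i+d+1)^α)/((i−d+2)^α + (i+d+1)^α) + α d / i| ≤ C (d² + i)/i²`. -/
theorem stmt5 (α : ℝ) (hα : 0 < α) :
    ∃ C : ℝ, 0 < C ∧ ∀ i : ℕ, 1 ≤ i → ∀ d : ℤ, 2 * |d| ≤ (i : ℤ) →
      |(((i : ℝ) - (d : ℝ) + 2) ^ α - ((i : ℝ) + (d : ℝ) + 1) ^ α)
          / (((i : ℝ) - (d : ℝ) + 2) ^ α + ((i : ℝ) + (d : ℝ) + 1) ^ α)
        + α * (d : ℝ) / (i : ℝ)|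
      ≤ C * ((d : ℝ) ^ 2 + (i : ℝ)) / (i : ℝ) ^ 2 :=
  stmt5_general α
end

section
/- For α > 0, ∑_{j=0}^{n-1} ((2j+2)^α − (2j+1)^α) = (1/2)(2n)^α + o(n^α) as n → ∞. -/
/-!
With `δ j = (2j+2)^α - 2(2j+1)^α + (2j)^α`, the quantity to estimate is `½ ∑_{j<n} δ j`,
while `(2n)^α = ∑_{j<n} ((2j+2)^α - (2j)^α)` telescopes. Put `ρ s = (1+s)^α - 1`; by
homogeneity, for `x = 2j` and `s = 1/x`, `δ j = x^α (ρ (2s) - 2ρ s)` and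
`(2j+2)^α - (2j)^α = x^α ρ (2s)`. Since `ρ 0 = 0` and `ρ' 0 = α ≠ 0`, the linear terms of
`ρ (2s) - 2ρ s` cancel, so `δ j` is negligible against the telescoping terms; as these are
nonnegative with divergent partial sums, `∑_{j<n} δ j = o((2n)^α) = o(n^α)`.
-/

open Filter Finset Asymptotics Topology

theorem HasDerivAt.comp_const_mul {f : ℝ → ℝ} {f' a x : ℝ} (hf : HasDerivAt f f' (a * x)) :
    HasDerivAt (fun s => f (a * s)) (a * f') x :=
  (hf.comp x ((hasDerivAt_id' x).const_mul a)).congr_deriv (by ring)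

theorem HasDerivAt.isLittleO_comp_const_mul_sub_const_mul {f : ℝ → ℝ} {f' : ℝ}
    (hf : HasDerivAt f f' 0) (h0 : f 0 = 0) (hf' : f' ≠ 0) {a : ℝ} (ha : a ≠ 0) :
    (fun s => f (a * s) - a * f s) =o[𝓝 0] fun s => f (a * s) := by
  have hfa : HasDerivAt (fun s => f (a * s)) (a * f') 0 :=
    HasDerivAt.comp_const_mul (by rwa [mul_zero])
  have hsmall : (fun s => f (a * s) - a * f s) =o[𝓝 0] fun s => s := by
    simpa [h0] using (hfa.sub (hf.const_mul a)).isLittleO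
  have hself : (fun s : ℝ => s) =O[𝓝 0] fun s => s * (a * f') :=
    (isBigO_self_const_mul (mul_ne_zero ha hf') (fun s : ℝ => s) _).congr_right
      fun s => mul_comm _ _
  have hlinear : (fun s => f (a * s) - s * (a * f')) =o[𝓝 0] fun s => s * (a * f') := by
    have h := hfa.isLittleO
    simp only [h0, mul_zero, sub_zero, smul_eq_mul] at h
    exact h.trans_isBigO hself
  exact hsmall.trans_isBigO <| hself.trans <|
    IsEquivalent.isBigO_symm (u := fun s => f (a * s)) (v := fun s => s * (a * f')) hlinear

namespace Real

variable {α : ℝ}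

theorem add_rpow_eq_rpow_mul_one_add_mul_inv {x : ℝ} (hx : 0 < x) {y : ℝ} (hy : 0 ≤ y) :
    (x + y) ^ α = x ^ α * (1 + y * x⁻¹) ^ α := by
  rw [← mul_rpow hx.le (by positivity)]
  field_simp

theorem isLittleO_rpow_add_two_sub_two_mul_rpow_add_one_add_rpow (hα : α ≠ 0) :
    (fun x : ℝ => (x + 2) ^ α - 2 * (x + 1) ^ α + x ^ α) =o[atTop]
      fun x => (x + 2) ^ α - x ^ α := by
  set ρ : ℝ → ℝ := fun s => (1 + s) ^ α - 1
  have hρ : HasDerivAt ρ α 0 :=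
    ((((hasDerivAt_id' (0 : ℝ)).const_add 1).rpow_const (p := α)
      (Or.inl (by norm_num))).sub_const 1).congr_deriv (by simp)
  have h := (hρ.isLittleO_comp_const_mul_sub_const_mul (by simp [ρ]) hα two_ne_zero).comp_tendsto
    tendsto_inv_atTop_zero
  have hscale : ∀ᶠ x : ℝ in atTop, (x + 2) ^ α = x ^ α * (1 + 2 * x⁻¹) ^ α ∧
      (x + 1) ^ α = x ^ α * (1 + x⁻¹) ^ α := by
    filter_upwards [eventually_gt_atTop 0] with x hx
    exact ⟨add_rpow_eq_rpow_mul_one_add_mul_inv hx zero_le_two,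
      by simpa using add_rpow_eq_rpow_mul_one_add_mul_inv (α := α) hx zero_le_one⟩
  refine ((isBigO_refl (fun x : ℝ => x ^ α) atTop).mul_isLittleO h).congr' ?_ ?_
  · filter_upwards [hscale] with x hx
    simp only [ρ, Function.comp_apply, hx.1, hx.2]
    ring
  · filter_upwards [hscale] with x hx
    simp only [ρ, Function.comp_apply, hx.1]
    ring

theorem sum_range_rpow_two_mul_add_two_sub_rpow_two_mul (hα : α ≠ 0) (n : ℕ) :
    ∑ j ∈ range n, ((2 * (j : ℝ) + 2) ^ α - (2 * (j : ℝ)) ^ α) = (2 * (n : ℝ)) ^ α := by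
  simpa [mul_add, zero_rpow hα] using sum_range_sub (fun j : ℕ => (2 * (j : ℝ)) ^ α) n

theorem sum_range_rpow_sub_sub_half_rpow (hα : α ≠ 0) (n : ℕ) :
    ∑ j ∈ range n, ((2 * (j : ℝ) + 2) ^ α - (2 * (j : ℝ) + 1) ^ α) - 1 / 2 * (2 * (n : ℝ)) ^ α =
      1 / 2 * ∑ j ∈ range n,
        ((2 * (j : ℝ) + 2) ^ α - 2 * (2 * (j : ℝ) + 1) ^ α + (2 * (j : ℝ)) ^ α) := by
  rw [← sum_range_rpow_two_mul_add_two_sub_rpow_two_mul hα, mul_sum, mul_sum, ← sum_sub_distrib]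
  exact sum_congr rfl fun j _ => by ring

end Real

/-- For `α > 0`, `∑_{j=0}^{n-1} ((2j+2)^α − (2j+1)^α) = (1/2)(2n)^α + o(n^α)`. -/
theorem stmt8 (α : ℝ) (hα : 0 < α) :
    Tendsto
      (fun n : ℕ =>
        ((∑ j ∈ range n, ((2 * (j : ℝ) + 2) ^ α - (2 * (j : ℝ) + 1) ^ α))
            - (1 / 2) * (2 * (n : ℝ)) ^ α) / (n : ℝ) ^ α)
      atTop (nhds 0) := by
  have htwo : Tendsto (fun j : ℕ => 2 * (j : ℝ)) atTop atTop :=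
    tendsto_natCast_atTop_atTop.const_mul_atTop two_pos
  have hterm :=
    (Real.isLittleO_rpow_add_two_sub_two_mul_rpow_add_one_add_rpow hα.ne').comp_tendsto htwo
  have hsum := hterm.sum_range (fun j => sub_nonneg.2 (Real.rpow_le_rpow (by positivity)
      (by simp) hα.le)) <| by
    simpa only [Function.comp_def, Real.sum_range_rpow_two_mul_add_two_sub_rpow_two_mul hα.ne']
      using (tendsto_rpow_atTop hα).comp htwo
  simp only [Function.comp_def, Real.sum_range_rpow_two_mul_add_two_sub_rpow_two_mul hα.ne'] at hsum
  have hscale : (fun n : ℕ => (2 * (n : ℝ)) ^ α) =O[atTop] fun n => (n : ℝ) ^ α :=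
    (isBigO_const_mul_self (2 ^ α) _ _).congr_left fun n =>
      (Real.mul_rpow zero_le_two (Nat.cast_nonneg n)).symm
  simpa only [Real.sum_range_rpow_sub_sub_half_rpow hα.ne'] using
    ((hsum.const_mul_left (1 / 2)).trans_isBigO hscale).tendsto_div_nhds_zero
end
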